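/- arXiv:2004.04960 — 7 statements merged into one kernel-verified Lean document; each statement's English description precedes it below -/
import Mathlib

section
/- Let ω(z) = c₁z + c₂z² + ⋯ be a Schwarz function (analytic on the unit disk with ω(0) = 0 and |ω(z)| < 1). Then |c₃ - 2c₁c₂ + c₁³| ≤ 1. -/
/-!
The coefficient `c₃ - 2 c₁ c₂ + c₁³` is the third Taylor coefficient of `F = ω / (1 + ω)`, which
maps the disk into the half-plane `Re w < 1/2`. Averaging `F` over the rotations `z ↦ ζʲ z` by the
`n`-th roots of unity kills its Taylor coefficients of orders `1, …, n - 1` and keeps the one of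
order `n`; the Möbius map `a ↦ a / (1 - a)` takes the average back into the disk. The result is a
function bounded by `1` whose expansion starts with `aₙ zⁿ`, so `‖aₙ‖ ≤ 1` by Cauchy's estimate.
-/

open Complex Metric Filter Asymptotics Topology Polynomial Finset NNReal

theorem HasFPowerSeriesAt.coeff_eq_of_tendsto {𝕜 E : Type*} [NontriviallyNormedField 𝕜]
    [NormedAddCommGroup E] [NormedSpace 𝕜 E] {f : 𝕜 → E} {p : FormalMultilinearSeries 𝕜 𝕜 E}
    {b : E} {n : ℕ} (hf : HasFPowerSeriesAt f p 0)
    (h : Tendsto (fun z => (z ^ n)⁻¹ • f z) (𝓝[≠] 0) (𝓝 b)) : p.coeff n = b := by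
  induction n generalizing f p with
  | zero =>
    simp only [pow_zero, inv_one, one_smul] at h
    exact (hf.coeff_zero _).trans
      (tendsto_nhds_unique (hf.continuousAt.tendsto.mono_left nhdsWithin_le_nhds) h)
  | succ n ih =>
    have hf0 : f 0 = 0 := by
      have hpow : Tendsto (fun z : 𝕜 => z ^ (n + 1)) (𝓝[≠] 0) (𝓝 0) :=
        ((continuous_pow _).tendsto' 0 0 (zero_pow n.succ_ne_zero)).mono_left nhdsWithin_le_nhds
      refine tendsto_nhds_unique (hf.continuousAt.tendsto.mono_left nhdsWithin_le_nhds)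
        ((zero_smul 𝕜 b ▸ hpow.smul h).congr' ?_)
      filter_upwards [self_mem_nhdsWithin] with z hz
      rw [smul_inv_smul₀ (pow_ne_zero _ hz)]
    rw [← FormalMultilinearSeries.coeff_fslope]
    refine ih hf.has_fpower_series_dslope_fslope (h.congr' ?_)
    filter_upwards [self_mem_nhdsWithin] with z hz
    rw [dslope_of_ne _ hz, slope, hf0, vsub_eq_sub, sub_zero, sub_zero, smul_smul, pow_succ,
      mul_inv]

theorem norm_le_one_of_tendsto_inv_pow_mul {G : ℂ → ℂ} {b : ℂ} {n : ℕ}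
    (hG : DifferentiableOn ℂ G (ball 0 1)) (hG1 : ∀ z ∈ ball (0 : ℂ) 1, ‖G z‖ ≤ 1)
    (h : Tendsto (fun z => (z ^ n)⁻¹ * G z) (𝓝[≠] 0) (𝓝 b)) : ‖b‖ ≤ 1 := by
  have hb : iteratedDeriv n G 0 / n.factorial = b := by
    simpa [FormalMultilinearSeries.coeff_ofScalars] using
      (hG.analyticAt (ball_mem_nhds 0 one_pos)).hasFPowerSeriesAt.coeff_eq_of_tendsto h
  have hcauchy : ∀ r ∈ Set.Ioo (0 : ℝ) 1, ‖b‖ * r ^ n ≤ 1 := by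
    rintro r ⟨hr0, hr1⟩
    have hest := norm_iteratedDeriv_le_of_forall_mem_sphere_norm_le n hr0
      (hG.diffContOnCl_ball (closedBall_subset_ball hr1))
      fun z hz => hG1 z (sphere_subset_closedBall.trans (closedBall_subset_ball hr1) hz)
    rw [mul_one, le_div_iff₀ (by positivity)] at hest
    rwa [← hb, norm_div, Complex.norm_natCast, div_mul_eq_mul_div, div_le_one (by positivity)]
  have hlim : Tendsto (fun r : ℝ => ‖b‖ * r ^ n) (𝓝[<] 1) (𝓝 ‖b‖) := by
    simpa using ((continuous_pow n).tendsto 1).const_mul ‖b‖ |>.mono_left nhdsWithin_le_nhds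
  exact le_of_tendsto hlim (Filter.mem_of_superset (Ioo_mem_nhdsLT zero_lt_one) hcauchy)

theorem IsPrimitiveRoot.sum_eval_pow_mul {R : Type*} [CommRing R] [IsDomain R] {ζ : R} {n : ℕ}
    (hζ : IsPrimitiveRoot ζ n) {P : R[X]} (hP0 : P.coeff 0 = 0) (hPn : P.natDegree ≤ n) (z : R) :
    ∑ j ∈ range n, P.eval (ζ ^ j * z) = n * P.coeff n * z ^ n := by
  have hterm : ∀ k, ∑ j ∈ range n, P.coeff k * (ζ ^ j * z) ^ k
      = P.coeff k * z ^ k * ∑ j ∈ range n, (ζ ^ k) ^ j := by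
    intro k
    rw [mul_sum]
    refine sum_congr rfl fun j _ => ?_
    ring
  simp_rw [eval_eq_sum_range' (Nat.lt_succ_of_le hPn)]
  rw [sum_comm, sum_eq_single n]
  · rw [hterm, hζ.pow_eq_one]
    simp only [one_pow, sum_const, card_range, nsmul_eq_mul, mul_one]
    ring
  · intro k hk hkn
    rw [hterm]
    rcases Nat.eq_zero_or_pos k with rfl | hk0
    · simp [hP0]
    have hne : ζ ^ k ≠ 1 :=
      hζ.pow_ne_one_of_pos_of_lt hk0.ne' (lt_of_le_of_ne (Nat.lt_succ_iff.1 (mem_range.1 hk)) hkn)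
    have hgeom : (∑ j ∈ range n, (ζ ^ k) ^ j) * (ζ ^ k - 1) = 0 := by
      rw [geom_sum_mul, ← pow_mul, mul_comm, pow_mul, hζ.pow_eq_one, one_pow, sub_self]
    rw [(mul_eq_zero.1 hgeom).resolve_right (sub_ne_zero.2 hne), mul_zero]
  · simp

theorem Asymptotics.IsLittleO.comp_const_mul {𝕜 E : Type*} [NormedField 𝕜] [NormedAddCommGroup E]
    {f : 𝕜 → E} {n : ℕ} (h : f =o[𝓝 0] (· ^ n)) (u : 𝕜) :
    (fun z => f (u * z)) =o[𝓝 0] (· ^ n) := by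
  have hu : Tendsto (u * ·) (𝓝 (0 : 𝕜)) (𝓝 0) := by
    simpa using (continuous_const_mul u).tendsto 0
  refine (h.comp_tendsto hu).trans_isBigO ?_
  simpa [Function.comp_def, mul_pow] using isBigO_const_mul_self (u ^ n) (· ^ n) (𝓝 (0 : 𝕜))

theorem tendsto_inv_pow_mul_div_one_sub {𝕜 : Type*} [NontriviallyNormedField 𝕜] {A : 𝕜 → 𝕜}
    {b : 𝕜} {n : ℕ} (hn : n ≠ 0) (h : (fun z => A z - b * z ^ n) =o[𝓝 0] (· ^ n)) :
    Tendsto (fun z => (z ^ n)⁻¹ * (A z / (1 - A z))) (𝓝[≠] 0) (𝓝 b) := by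
  have hAb : Tendsto (fun z => (z ^ n)⁻¹ * A z) (𝓝[≠] 0) (𝓝 b) := by
    refine (zero_add b ▸
      (h.tendsto_div_nhds_zero.mono_left nhdsWithin_le_nhds).add_const b).congr' ?_
    filter_upwards [self_mem_nhdsWithin] with z hz
    field_simp [pow_ne_zero n hz]
    ring
  have hA : Tendsto A (𝓝[≠] 0) (𝓝 0) := by
    have hpow : Tendsto (· ^ n) (𝓝[≠] (0 : 𝕜)) (𝓝 0) :=
      ((continuous_pow n).tendsto' 0 0 (zero_pow hn)).mono_left nhdsWithin_le_nhds
    refine (zero_mul b ▸ hpow.mul hAb).congr' ?_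
    filter_upwards [self_mem_nhdsWithin] with z hz
    rw [mul_inv_cancel_left₀ (pow_ne_zero n hz)]
  simpa [Pi.div_def, mul_div_assoc] using
    hAb.div (tendsto_const_nhds.sub hA) (by norm_num : (1 : 𝕜) - 0 ≠ 0)

theorem norm_lt_norm_one_sub_iff {a : ℂ} : ‖a‖ < ‖1 - a‖ ↔ a.re < 1 / 2 := by
  rw [← sq_lt_sq₀ (norm_nonneg _) (norm_nonneg _), Complex.sq_norm, Complex.sq_norm,
    Complex.normSq_apply, Complex.normSq_apply]
  simp only [Complex.sub_re, Complex.sub_im, Complex.one_re, Complex.one_im]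
  constructor <;> intro h <;> nlinarith

theorem one_add_ne_zero_of_norm_lt_one {R : Type*} [NormedRing R] [NormOneClass R] {w : R}
    (hw : ‖w‖ < 1) : 1 + w ≠ 0 := fun h => by
  simp [eq_neg_of_add_eq_zero_right h] at hw

theorem re_div_one_add_lt_half {w : ℂ} (hw : ‖w‖ < 1) : (w / (1 + w)).re < 1 / 2 := by
  have hw1 := one_add_ne_zero_of_norm_lt_one hw
  rw [← norm_lt_norm_one_sub_iff, one_sub_div hw1, add_sub_cancel_right, norm_div, norm_div,
    norm_one]
  gcongr

theorem norm_div_one_sub_lt_one {a : ℂ} (ha : a.re < 1 / 2) : ‖a / (1 - a)‖ < 1 := by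
  have h := norm_lt_norm_one_sub_iff.2 ha
  rw [norm_div, div_lt_one ((norm_nonneg a).trans_lt h)]
  exact h

theorem norm_coeff_le_one_of_re_lt_half {F : ℂ → ℂ} {P : ℂ[X]} {n : ℕ} (hn : n ≠ 0)
    (hF : DifferentiableOn ℂ F (ball 0 1)) (hre : ∀ z ∈ ball (0 : ℂ) 1, (F z).re < 1 / 2)
    (hP0 : P.coeff 0 = 0) (hPn : P.natDegree ≤ n)
    (hFP : (fun z => F z - P.eval z) =o[𝓝 0] (· ^ n)) : ‖P.coeff n‖ ≤ 1 := by
  obtain ⟨ζ, hζ⟩ : ∃ ζ : ℂ, IsPrimitiveRoot ζ n := ⟨_, isPrimitiveRoot_exp n hn⟩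
  have hrot : ∀ j, ∀ z ∈ ball (0 : ℂ) 1, ζ ^ j * z ∈ ball (0 : ℂ) 1 := by
    simp [hζ.norm'_eq_one hn]
  set A : ℂ → ℂ := fun z => (n : ℂ)⁻¹ * ∑ j ∈ range n, F (ζ ^ j * z)
  have hA : DifferentiableOn ℂ A (ball 0 1) := by
    exact (DifferentiableOn.fun_sum fun j _ => hF.comp (by fun_prop) (hrot j)).const_mul _
  have hAre : ∀ z ∈ ball (0 : ℂ) 1, (A z).re < 1 / 2 := by
    intro z hz
    have hn' : (0 : ℝ) < n := Nat.cast_pos.2 (Nat.pos_of_ne_zero hn)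
    have hsum := sum_lt_sum_of_nonempty (nonempty_range_iff.2 hn)
      fun j _ => hre _ (hrot j z hz)
    simp only [sum_const, card_range, nsmul_eq_mul] at hsum
    simp only [A]
    rw [← ofReal_natCast, ← ofReal_inv, re_ofReal_mul, re_sum, inv_mul_lt_iff₀ hn']
    linarith
  have hAP : (fun z => A z - P.coeff n * z ^ n) =o[𝓝 0] (· ^ n) := by
    have hsplit : (fun z => A z - P.coeff n * z ^ n)
        = fun z => (n : ℂ)⁻¹ * ∑ j ∈ range n, (F (ζ ^ j * z) - P.eval (ζ ^ j * z)) := by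
      funext z
      rw [sum_sub_distrib, hζ.sum_eval_pow_mul hP0 hPn, mul_sub, ← mul_assoc, ← mul_assoc,
        inv_mul_cancel₀ (Nat.cast_ne_zero.2 hn), one_mul]
    rw [hsplit]
    exact (IsLittleO.fun_sum fun j _ => hFP.comp_const_mul (ζ ^ j)).const_mul_left _
  refine norm_le_one_of_tendsto_inv_pow_mul (G := fun z => A z / (1 - A z)) ?_
    (fun z hz => (norm_div_one_sub_lt_one (hAre z hz)).le)
    (tendsto_inv_pow_mul_div_one_sub hn hAP)
  refine hA.div ((differentiableOn_const 1).sub hA) fun z hz h => ?_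
  have := hAre z hz
  rw [← sub_eq_zero.1 h] at this
  norm_num at this

theorem hasFPowerSeriesOnBall_ofScalars_of_hasSum
    {f : ℂ → ℂ} {c : ℕ → ℂ} {r : ℝ≥0} (hr : 0 < r)
    (h : ∀ z ∈ ball (0 : ℂ) r, HasSum (fun n => c n * z ^ n) (f z)) :
    HasFPowerSeriesOnBall f (FormalMultilinearSeries.ofScalars ℂ c) 0 r := by
  refine ⟨?_, ENNReal.coe_pos.2 hr, fun {y} hy => ?_⟩
  · refine ENNReal.le_of_forall_nnreal_lt fun s hs => ?_
    have hs' : (s : ℂ) ∈ ball (0 : ℂ) r := by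
      simpa using (ENNReal.coe_lt_coe.1 hs : s < r)
    refine FormalMultilinearSeries.le_radius_of_tendsto _ (l := 0) ?_
    simpa [FormalMultilinearSeries.ofScalars_norm] using
      (h _ hs').summable.tendsto_atTop_zero.norm
  · simpa [FormalMultilinearSeries.ofScalars_apply_eq, mul_comm] using h y (by simpa using hy)

theorem HasFPowerSeriesAt.isBigO_sub_sum_ofScalars {𝕜 : Type*} [NontriviallyNormedField 𝕜]
    {f : 𝕜 → 𝕜} {c : ℕ → 𝕜} (hf : HasFPowerSeriesAt f (FormalMultilinearSeries.ofScalars 𝕜 c) 0)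
    (n : ℕ) : (fun z => f z - ∑ k ∈ range n, c k * z ^ k) =O[𝓝 0] (· ^ n) := by
  have h := hf.isBigO_sub_partialSum_pow n
  simp_rw [← norm_pow] at h
  simpa [FormalMultilinearSeries.partialSum, FormalMultilinearSeries.ofScalars_apply_eq,
    mul_comm] using h.of_norm_right

theorem isBigO_div_one_add_sub_cubic {ω : ℂ → ℂ} {a₁ a₂ a₃ : ℂ}
    (h : (fun z => ω z - (a₁ * z + a₂ * z ^ 2 + a₃ * z ^ 3)) =O[𝓝 0] (· ^ 4)) :
    (fun z => ω z / (1 + ω z)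
      - (a₁ * z + (a₂ - a₁ ^ 2) * z ^ 2 + (a₃ - 2 * a₁ * a₂ + a₁ ^ 3) * z ^ 3))
      =O[𝓝 0] (· ^ 4) := by
  set p : ℂ → ℂ := fun z => a₁ * z + a₂ * z ^ 2 + a₃ * z ^ 3
  set q : ℂ → ℂ := fun z => a₁ * z + (a₂ - a₁ ^ 2) * z ^ 2 + (a₃ - 2 * a₁ * a₂ + a₁ ^ 3) * z ^ 3
  have hω : Tendsto ω (𝓝 0) (𝓝 0) := by
    have hp : Tendsto p (𝓝 0) (𝓝 0) := by
      simpa [p] using (show Continuous p by fun_prop).tendsto 0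
    have hE := h.trans_tendsto (by simpa using (continuous_pow 4).tendsto (0 : ℂ))
    simpa [p] using hE.add hp
  have hden : Tendsto (fun z => 1 + ω z) (𝓝 0) (𝓝 1) := by
    simpa using tendsto_const_nhds.add hω
  have hinv : (fun z => (1 + ω z)⁻¹) =O[𝓝 0] (fun _ => (1 : ℂ)) :=
    (hden.inv₀ one_ne_zero).isBigO_one ℂ
  -- `q` is the cubic Taylor polynomial of `p / (1 + p)`, so `p - q * (1 + p)` vanishes to order 4.
  obtain ⟨r, hr, hfactor⟩ : ∃ r : ℂ → ℂ, Continuous r ∧ ∀ z, p z - q z - q z * p z = z ^ 4 * r z :=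
    ⟨fun z => -(a₁ * a₃ + (a₂ - a₁ ^ 2) * a₂ + (a₃ - 2 * a₁ * a₂ + a₁ ^ 3) * a₁)
        - ((a₂ - a₁ ^ 2) * a₃ + (a₃ - 2 * a₁ * a₂ + a₁ ^ 3) * a₂) * z
        - (a₃ - 2 * a₁ * a₂ + a₁ ^ 3) * a₃ * z ^ 2, by fun_prop, fun z => by simp only [p, q]; ring⟩
  have htrunc : (fun z => p z - q z - q z * p z) =O[𝓝 0] (· ^ 4) := by
    simpa [hfactor] using (isBigO_refl (· ^ 4) (𝓝 (0 : ℂ))).mul ((hr.tendsto 0).isBigO_one ℂ)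
  have hq : (fun z => 1 - q z) =O[𝓝 0] (fun _ => (1 : ℂ)) :=
    (show Continuous fun z => 1 - q z by fun_prop).tendsto 0 |>.isBigO_one ℂ
  have hnum : (fun z => (ω z - p z) * (1 - q z) + (p z - q z - q z * p z)) =O[𝓝 0] (· ^ 4) := by
    have hE := h.mul hq
    simp only [mul_one] at hE
    exact hE.add htrunc
  refine (hnum.mul hinv).congr' ?_ (.of_forall fun _ => mul_one _)
  filter_upwards [hden.eventually_ne one_ne_zero] with z hz
  field_simp
  simp only [p, q]
  ring

theorem schwarz_coeff_bound_0 (ω : ℂ → ℂ) (c : ℕ → ℂ)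
    (hc0 : c 0 = 0)
    (hsum : ∀ z ∈ ball (0 : ℂ) 1, HasSum (fun n => c n * z ^ n) (ω z))
    (hω : ∀ z ∈ ball (0 : ℂ) 1, ‖ω z‖ < 1) :
    ‖c 3 - 2 * c 1 * c 2 + c 1 ^ 3‖ ≤ 1 := by
  have hseries := hasFPowerSeriesOnBall_ofScalars_of_hasSum (r := 1) one_pos (by simpa using hsum)
  have hdiff : DifferentiableOn ℂ ω (ball 0 1) := by
    simpa only [eball_coe, NNReal.coe_one] using hseries.differentiableOn
  have hexpansion := isBigO_div_one_add_sub_cubic (by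
    simpa [sum_range_succ, hc0] using hseries.hasFPowerSeriesAt.isBigO_sub_sum_ofScalars 4)
  set P : ℂ[X] :=
    C (c 1) * X + C (c 2 - c 1 ^ 2) * X ^ 2 + C (c 3 - 2 * c 1 * c 2 + c 1 ^ 3) * X ^ 3
  have hP3 : P.coeff 3 = c 3 - 2 * c 1 * c 2 + c 1 ^ 3 := by
    simp only [P, coeff_add, coeff_C_mul, coeff_X_pow, coeff_X]
    norm_num
  rw [← hP3]
  refine norm_coeff_le_one_of_re_lt_half three_ne_zero
    (hdiff.div ((differentiableOn_const 1).add hdiff)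
      fun z hz => one_add_ne_zero_of_norm_lt_one (hω z hz))
    (fun z hz => re_div_one_add_lt_half (hω z hz)) (by simp [P])
    (by simp only [P]; compute_degree) ?_
  simpa [P] using hexpansion.trans_isLittleO (isLittleO_pow_pow (by norm_num : 3 < 4))
end

section
/- Let ω(z) = c₁z + c₂z² + ⋯ be a Schwarz function. Then |c₄| ≤ 1 - |c₁|² - |c₂|². -/
open Complex ComplexConjugate Metric Polynomial Real Finset Filter Topology MeasureTheory
open Asymptotics

/-!
Multiplying a Schwarz function `ω = ∑ cₙ zⁿ` by a polynomial `q` gives the power series whose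
coefficients are the Cauchy product `c ⋆ q`. On a circle of radius `r < 1` we have `|ω q| ≤ |q|`,
so Parseval's identity gives `∑ |(c ⋆ q)ₙ|² r²ⁿ ≤ ∑ |qₙ|² r²ⁿ`, and letting `r → 1` any finite
part of the left side is at most `∑ |qₙ|²`. For `q = 1 + v₂ z² + v₃ z³` (and `c₀ = 0`) this reads
`|c₁|² + |c₂|² + |c₄ + v₂ c₂ + v₃ c₁|² ≤ 1 + |v₂|² + |v₃|²`. Writing `c₄ = u |c₄|` with `|u| = 1`,
the choice `v₂ = u c̄₂`, `v₃ = u c̄₁` turns it into `(|c₄| + |c₁|² + |c₂|²)² ≤ 1`.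
-/

theorem hasSum_circleAverage_of_norm_le {E : Type*} [NormedAddCommGroup E] [NormedSpace ℝ E]
    [CompleteSpace E] {F : ℕ → ℂ → E} {f : ℂ → E} {c : ℂ} {R : ℝ} {u : ℕ → ℝ}
    (hF : ∀ n, CircleIntegrable (F n) c R) (hu : Summable u)
    (hFu : ∀ n, ∀ z ∈ sphere c |R|, ‖F n z‖ ≤ u n)
    (hf : ∀ z ∈ sphere c |R|, HasSum (fun n => F n z) (f z)) :
    HasSum (fun n => circleAverage (F n) c R) (circleAverage f c R) :=
  .const_smul _ <| intervalIntegral.hasSum_integral_of_dominated_convergence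
    (fun n _ => u n) (fun n => (hF n).def'.aestronglyMeasurable)
    (fun n => .of_forall fun θ _ => hFu n _ (circleMap_mem_sphere' c R θ))
    (.of_forall fun _ _ => hu) intervalIntegrable_const
    (.of_forall fun θ _ => hf _ (circleMap_mem_sphere' c R θ))

theorem integral_exp_int_mul_I_eq_zero {k : ℤ} (hk : k ≠ 0) :
    ∫ θ in (0)..2 * π, exp (k * I * θ) = 0 := by
  have hkI : (k : ℂ) * I ≠ 0 := mul_ne_zero (Int.cast_ne_zero.2 hk) I_ne_zero
  rw [integral_exp_mul_complex hkI]
  push_cast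
  rw [show (k : ℂ) * I * (2 * π) = k * (2 * π * I) by ring, exp_int_mul_two_pi_mul_I]
  simp

theorem circleMap_zero_pow_mul_conj_pow (R θ : ℝ) (n m : ℕ) :
    circleMap 0 R θ ^ n * conj (circleMap 0 R θ) ^ m
      = (R : ℂ) ^ (n + m) * exp (((n : ℤ) - m : ℤ) * I * θ) := by
  simp only [circleMap, zero_add, map_mul, conj_ofReal, ← exp_conj, conj_I, mul_pow,
    ← Complex.exp_nat_mul, pow_add]
  rw [mul_mul_mul_comm, ← Complex.exp_add]
  push_cast
  ring_nf

theorem circleAverage_pow_mul_conj_pow (R : ℝ) (n m : ℕ) :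
    circleAverage (fun z => z ^ n * conj z ^ m) 0 R = if n = m then (R : ℂ) ^ (2 * n) else 0 := by
  rw [circleAverage_def]
  simp_rw [circleMap_zero_pow_mul_conj_pow, intervalIntegral.integral_const_mul]
  split_ifs with h
  · subst h
    simp only [sub_self, Int.cast_zero, zero_mul, Complex.exp_zero, intervalIntegral.integral_const,
      sub_zero, real_smul, ← two_mul]
    push_cast
    field_simp
  · rw [integral_exp_int_mul_I_eq_zero (by omega), mul_zero, smul_zero]

theorem continuousOn_sphere_of_hasSum_mul_pow {b : ℕ → ℂ} {f : ℂ → ℂ} {R : ℝ}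
    (hb : Summable fun n => ‖b n‖ * |R| ^ n)
    (hf : ∀ z ∈ sphere (0 : ℂ) |R|, HasSum (fun n => b n * z ^ n) (f z)) :
    ContinuousOn f (sphere 0 |R|) := by
  refine (continuousOn_tsum (f := fun n z => b n * z ^ n) (fun n => by fun_prop) hb
    fun n z hz => ?_).congr fun z hz => (hf z hz).tsum_eq.symm
  rw [norm_mul, norm_pow, mem_sphere_zero_iff_norm.1 hz]

theorem circleAverage_mul_conj_pow_of_hasSum {b : ℕ → ℂ} {f : ℂ → ℂ} {R : ℝ}
    (hb : Summable fun n => ‖b n‖ * |R| ^ n)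
    (hf : ∀ z ∈ sphere (0 : ℂ) |R|, HasSum (fun n => b n * z ^ n) (f z)) (m : ℕ) :
    circleAverage (fun z => f z * conj z ^ m) 0 R = b m * R ^ (2 * m) := by
  refine (hasSum_circleAverage_of_norm_le (F := fun n z => b n * (z ^ n * conj z ^ m))
    (u := fun n => ‖b n‖ * |R| ^ n * |R| ^ m) (fun n => ?_) (hb.mul_right _) (fun n z hz => ?_)
    fun z hz => ?_).unique ?_
  · exact (Continuous.continuousOn (by fun_prop)).circleIntegrable'
  · rw [← mul_assoc, norm_mul, norm_mul, norm_pow, norm_pow, RCLike.norm_conj,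
      mem_sphere_zero_iff_norm.1 hz]
  · simpa only [mul_assoc] using (hf z hz).mul_right (conj z ^ m)
  · simp_rw [← smul_eq_mul (b _), circleAverage_fun_smul, circleAverage_pow_mul_conj_pow,
      smul_eq_mul, mul_ite, mul_zero]
    simpa using hasSum_single (f := fun n => if n = m then b n * (R : ℂ) ^ (2 * n) else 0) m
      fun n hn => if_neg hn

theorem hasSum_norm_sq_mul_pow_circleAverage {b : ℕ → ℂ} {f : ℂ → ℂ} {R : ℝ}
    (hb : Summable fun n => ‖b n‖ * |R| ^ n)
    (hf : ∀ z ∈ sphere (0 : ℂ) |R|, HasSum (fun n => b n * z ^ n) (f z)) :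
    HasSum (fun n => ‖b n‖ ^ 2 * R ^ (2 * n)) (circleAverage (fun z => ‖f z‖ ^ 2) 0 R) := by
  have hcont := continuousOn_sphere_of_hasSum_mul_pow hb hf
  have hB : ∀ z ∈ sphere (0 : ℂ) |R|, ‖f z‖ ≤ ∑' n, ‖b n‖ * |R| ^ n := fun z hz =>
    (hf z hz).norm_le_of_bounded hb.hasSum fun n => by
      rw [norm_mul, norm_pow, mem_sphere_zero_iff_norm.1 hz]
  have hsq : HasSum (fun m => circleAverage (fun z => conj (b m) * (f z * conj z ^ m)) 0 R)
      (circleAverage (fun z => f z * conj (f z)) 0 R) := by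
    refine hasSum_circleAverage_of_norm_le (u := fun m => ‖b m‖ * |R| ^ m * ∑' n, ‖b n‖ * |R| ^ n)
      (fun m => ?_) (hb.mul_right _) (fun m z hz => ?_) (fun z hz => ?_)
    · exact (continuousOn_const.mul (hcont.mul (by fun_prop))).circleIntegrable'
    · rw [norm_mul, norm_mul, RCLike.norm_conj, norm_pow, RCLike.norm_conj,
        mem_sphere_zero_iff_norm.1 hz, mul_assoc, mul_comm ‖f z‖]
      gcongr
      exact hB z hz
    · simpa only [map_mul, map_pow, mul_left_comm (f z)] using
        (Complex.hasSum_conj'.2 (hf z hz)).mul_left (f z)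
  simp_rw [← smul_eq_mul (conj (b _)), circleAverage_fun_smul, smul_eq_mul,
    circleAverage_mul_conj_pow_of_hasSum hb hf] at hsq
  rw [← Complex.hasSum_ofReal]
  convert hsq using 1
  · funext m
    simp only [← mul_assoc, conj_mul']
    push_cast
    ring
  · rw [← ofRealCLM_apply, ← ofRealCLM.circleAverage_comp_comm
      (ContinuousOn.circleIntegrable' (f := fun z => ‖f z‖ ^ 2) (hcont.norm.pow 2))]
    congr 1
    funext z
    simp [mul_conj']

theorem summable_norm_mul_pow_of_lt {c : ℕ → ℂ} {z : ℂ} {r : ℝ}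
    (hz : Summable fun n => c n * z ^ n) (hr : |r| < ‖z‖) :
    Summable fun n => ‖c n‖ * |r| ^ n := by
  have hz0 : 0 < ‖z‖ := (abs_nonneg r).trans_lt hr
  refine summable_of_isBigO_nat
    (summable_geometric_of_lt_one (by positivity) ((div_lt_one hz0).2 hr)) ?_
  have hbdd : (fun n => ‖c n * z ^ n‖) =O[atTop] fun _ => (1 : ℝ) :=
    hz.tendsto_atTop_zero.norm.isBigO_one ℝ
  refine (hbdd.mul (isBigO_refl (fun n => (|r| / ‖z‖) ^ n) atTop)).congr (fun n => ?_)
    fun n => one_mul _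
  rw [norm_mul, norm_pow, div_pow]
  field_simp

theorem sum_range_mul_pow_mul_mul_pow (a p : ℕ → ℂ) (z : ℂ) (n : ℕ) :
    ∑ k ∈ range (n + 1), a k * z ^ k * (p (n - k) * z ^ (n - k))
      = (∑ k ∈ range (n + 1), a k * p (n - k)) * z ^ n := by
  rw [sum_mul]
  refine sum_congr rfl fun k hk => ?_
  rw [mul_mul_mul_comm, pow_mul_pow_sub z (by simpa [Nat.lt_succ_iff] using hk)]

theorem summable_norm_cauchyProduct_mul_pow {a p : ℕ → ℂ} {z : ℂ}
    (ha : Summable fun n => ‖a n * z ^ n‖) (hp : Summable fun n => ‖p n * z ^ n‖) :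
    Summable fun n => ‖(∑ k ∈ range (n + 1), a k * p (n - k)) * z ^ n‖ := by
  simpa only [sum_range_mul_pow_mul_mul_pow] using
    summable_norm_sum_mul_range_of_summable_norm ha hp

theorem hasSum_cauchyProduct_mul_pow {a p : ℕ → ℂ} {z : ℂ}
    (ha : Summable fun n => ‖a n * z ^ n‖) (hp : Summable fun n => ‖p n * z ^ n‖) :
    HasSum (fun n => (∑ k ∈ range (n + 1), a k * p (n - k)) * z ^ n)
      ((∑' n, a n * z ^ n) * ∑' n, p n * z ^ n) := by
  simpa only [sum_range_mul_pow_mul_mul_pow] using hasSum_sum_range_mul_of_summable_norm ha hp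

theorem Polynomial.hasSum_coeff_mul_pow (P : ℂ[X]) (z : ℂ) :
    HasSum (fun n => P.coeff n * z ^ n) (P.eval z) := by
  rw [eval_eq_sum, Polynomial.sum_def]
  exact hasSum_sum_of_ne_finset_zero fun n hn => by simp [notMem_support_iff.1 hn]

theorem sum_norm_sq_cauchyProduct_coeff_mul_pow_le {ω : ℂ → ℂ} {c : ℕ → ℂ}
    (hsum : ∀ z ∈ ball (0 : ℂ) 1, HasSum (fun n => c n * z ^ n) (ω z))
    (hω : ∀ z ∈ ball (0 : ℂ) 1, ‖ω z‖ ≤ 1) (P : ℂ[X]) (S : Finset ℕ) {r : ℝ} (hr : |r| < 1) :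
    ∑ n ∈ S, ‖∑ k ∈ range (n + 1), c k * P.coeff (n - k)‖ ^ 2 * r ^ (2 * n)
      ≤ ∑ n ∈ P.support, ‖P.coeff n‖ ^ 2 * r ^ (2 * n) := by
  set b : ℕ → ℂ := fun n => ∑ k ∈ range (n + 1), c k * P.coeff (n - k)
  have hball : ∀ z ∈ sphere (0 : ℂ) |r|, z ∈ ball (0 : ℂ) 1 := fun z hz => by
    rwa [mem_ball_zero_iff, mem_sphere_zero_iff_norm.1 hz]
  have hnorm : ∀ (a : ℕ → ℂ), ∀ z ∈ sphere (0 : ℂ) |r|,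
      (fun n => ‖a n * z ^ n‖) = fun n => ‖a n‖ * |r| ^ n := fun a z hz => by
    simp only [norm_mul, norm_pow, mem_sphere_zero_iff_norm.1 hz]
  have hc : Summable fun n => ‖c n‖ * |r| ^ n := by
    have hz : ‖(((1 + |r|) / 2 : ℝ) : ℂ)‖ = (1 + |r|) / 2 := by
      rw [norm_real, Real.norm_of_nonneg (by positivity)]
    refine summable_norm_mul_pow_of_lt (hsum (((1 + |r|) / 2 : ℝ) : ℂ) ?_).summable ?_
    · rw [mem_ball_zero_iff, hz]
      linarith
    · rw [hz]
      linarith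
  have hP : Summable fun n => ‖P.coeff n‖ * |r| ^ n :=
    summable_of_ne_finset_zero (s := P.support) fun n hn => by simp [notMem_support_iff.1 hn]
  have hb : Summable fun n => ‖b n‖ * |r| ^ n := by
    have habs : ((|r| : ℝ) : ℂ) ∈ sphere (0 : ℂ) |r| := by simp
    rw [← hnorm b _ habs]
    exact summable_norm_cauchyProduct_mul_pow (by rwa [hnorm c _ habs]) (by rwa [hnorm _ _ habs])
  have hbsum : ∀ z ∈ sphere (0 : ℂ) |r|, HasSum (fun n => b n * z ^ n) (ω z * P.eval z) := by
    intro z hz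
    rw [← (hsum z (hball z hz)).tsum_eq, ← (P.hasSum_coeff_mul_pow z).tsum_eq]
    exact hasSum_cauchyProduct_mul_pow (by rwa [hnorm c z hz]) (by rwa [hnorm _ z hz])
  calc ∑ n ∈ S, ‖b n‖ ^ 2 * r ^ (2 * n)
      ≤ circleAverage (fun z => ‖ω z * P.eval z‖ ^ 2) 0 r :=
        sum_le_hasSum S (fun n _ => mul_nonneg (sq_nonneg _) ((even_two_mul n).pow_nonneg r))
          (hasSum_norm_sq_mul_pow_circleAverage hb hbsum)
    _ ≤ circleAverage (fun z => ‖P.eval z‖ ^ 2) 0 r := by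
        refine circleAverage_mono
          ((continuousOn_sphere_of_hasSum_mul_pow hb hbsum).norm.pow 2).circleIntegrable'
          (Continuous.continuousOn (by fun_prop)).circleIntegrable' fun z hz => ?_
        rw [norm_mul, mul_pow]
        exact mul_le_of_le_one_left (by positivity)
          (pow_le_one₀ (norm_nonneg _) (hω z (hball z hz)))
    _ = ∑ n ∈ P.support, ‖P.coeff n‖ ^ 2 * r ^ (2 * n) :=
        (hasSum_norm_sq_mul_pow_circleAverage hP fun z _ => P.hasSum_coeff_mul_pow z).unique
          (hasSum_sum_of_ne_finset_zero fun n hn => by simp [notMem_support_iff.1 hn])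

theorem sum_norm_sq_cauchyProduct_coeff_le {ω : ℂ → ℂ} {c : ℕ → ℂ}
    (hsum : ∀ z ∈ ball (0 : ℂ) 1, HasSum (fun n => c n * z ^ n) (ω z))
    (hω : ∀ z ∈ ball (0 : ℂ) 1, ‖ω z‖ ≤ 1) (P : ℂ[X]) (S : Finset ℕ) :
    ∑ n ∈ S, ‖∑ k ∈ range (n + 1), c k * P.coeff (n - k)‖ ^ 2
      ≤ ∑ n ∈ P.support, ‖P.coeff n‖ ^ 2 := by
  set b : ℕ → ℂ := fun n => ∑ k ∈ range (n + 1), c k * P.coeff (n - k)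
  have hlim : Tendsto (fun r : ℝ => ∑ n ∈ S, ‖b n‖ ^ 2 * r ^ (2 * n)) (𝓝[<] 1)
      (𝓝 (∑ n ∈ S, ‖b n‖ ^ 2)) := by
    have := (by fun_prop : Continuous fun r : ℝ => ∑ n ∈ S, ‖b n‖ ^ 2 * r ^ (2 * n)).tendsto 1
    simpa using this.mono_left nhdsWithin_le_nhds
  refine le_of_tendsto hlim (eventually_of_mem (Ioo_mem_nhdsLT zero_lt_one) fun r hr => ?_)
  have hr1 : |r| < 1 := by rw [abs_of_pos hr.1]; exact hr.2
  refine (sum_norm_sq_cauchyProduct_coeff_mul_pow_le hsum hω P S hr1).trans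
    (sum_le_sum fun n _ => mul_le_of_le_one_right (by positivity) ?_)
  exact pow_le_one₀ hr.1.le hr.2.le

theorem sum_norm_sq_coeff_one_two_four_le {ω : ℂ → ℂ} {c : ℕ → ℂ} (hc0 : c 0 = 0)
    (hsum : ∀ z ∈ ball (0 : ℂ) 1, HasSum (fun n => c n * z ^ n) (ω z))
    (hω : ∀ z ∈ ball (0 : ℂ) 1, ‖ω z‖ ≤ 1) (v₂ v₃ : ℂ) :
    ‖c 1‖ ^ 2 + ‖c 2‖ ^ 2 + ‖c 4 + v₂ * c 2 + v₃ * c 1‖ ^ 2 ≤ 1 + ‖v₂‖ ^ 2 + ‖v₃‖ ^ 2 := by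
  set P : ℂ[X] := 1 + C v₂ * X ^ 2 + C v₃ * X ^ 3
  have hP : ∀ n, P.coeff n =
      if n = 0 then 1 else if n = 2 then v₂ else if n = 3 then v₃ else 0 := by
    intro n
    simp only [P, coeff_add, coeff_one, coeff_C_mul, coeff_X_pow]
    split_ifs <;> simp_all
  have hsupp : ∑ n ∈ P.support, ‖P.coeff n‖ ^ 2 = 1 + ‖v₂‖ ^ 2 + ‖v₃‖ ^ 2 := by
    rw [sum_subset (s₂ := range 4) (fun n hn => ?_)
      fun n _ hn => by rw [notMem_support_iff.1 hn, norm_zero, sq, mul_zero]]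
    · simp [sum_range_succ, hP, add_assoc]
    · rw [mem_support_iff, hP] at hn
      rw [mem_range]
      split_ifs at hn <;> first | omega | simp at hn
  have h1 : ∑ k ∈ range (1 + 1), c k * P.coeff (1 - k) = c 1 := by
    simp [sum_range_succ, hP]
  have h2 : ∑ k ∈ range (2 + 1), c k * P.coeff (2 - k) = c 2 := by
    simp [sum_range_succ, hP, hc0]
  have h4 : ∑ k ∈ range (4 + 1), c k * P.coeff (4 - k) = c 4 + v₂ * c 2 + v₃ * c 1 := by
    simp only [sum_range_succ, hP]
    norm_num
    ring
  have key := sum_norm_sq_cauchyProduct_coeff_le hsum hω P {1, 2, 4}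
  rwa [sum_insert (by decide), sum_insert (by decide), sum_singleton, h1, h2, h4, hsupp,
    ← add_assoc] at key

theorem schwarz_coeff_bound_3 (ω : ℂ → ℂ) (c : ℕ → ℂ)
    (hc0 : c 0 = 0)
    (hsum : ∀ z ∈ ball (0 : ℂ) 1, HasSum (fun n => c n * z ^ n) (ω z))
    (hω : ∀ z ∈ ball (0 : ℂ) 1, ‖ω z‖ < 1) :
    ‖c 4‖ ≤ 1 - ‖c 1‖ ^ 2 - ‖c 2‖ ^ 2 := by
  set u := exp (arg (c 4) * I)
  have hu : ‖u‖ = 1 := norm_exp_ofReal_mul_I _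
  have hsub : c 4 + u * conj (c 2) * c 2 + u * conj (c 1) * c 1
      = u * ((‖c 4‖ + ‖c 1‖ ^ 2 + ‖c 2‖ ^ 2 : ℝ) : ℂ) := by
    push_cast
    linear_combination (norm_mul_exp_arg_mul_I (c 4)).symm + u * mul_conj' (c 1)
      + u * mul_conj' (c 2)
  have key := sum_norm_sq_coeff_one_two_four_le hc0 hsum (fun z hz => (hω z hz).le)
    (u * conj (c 2)) (u * conj (c 1))
  rw [hsub, norm_mul, norm_mul, norm_mul, hu, RCLike.norm_conj, RCLike.norm_conj, norm_real,
    Real.norm_of_nonneg (by positivity)] at key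
  nlinarith [norm_nonneg (c 4), sq_nonneg ‖c 1‖, sq_nonneg ‖c 2‖]
end

section
/- Let f be analytic and univalent on the unit disk with f(z) = z + a₂z² + a₃z³ + ⋯ and Re f'(z) > 0 on the disk. Then |a₃(a₂a₄ − a₃²) − a₄(a₄ − a₂a₃) + a₅(a₃ − a₂²)| ≤ 207/540. -/
/-!
Write `f' = ∑ cₙ zⁿ` with `cₙ = (n + 1) aₙ₊₁`. For `r < 1` the Fourier coefficients of
`θ ↦ Re f'(r e^{iθ}) ≥ 0` form a positive definite sequence on `ℤ`, normalised to `1` at `0` and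
equal to `zₙ = cₙ rⁿ / 2` at `n > 0`. Its Toeplitz determinants of size two and three give
`‖zₙ‖ ≤ 1` and `‖z_{m+n} - z_m z_n‖² ≤ (1 - ‖z_m‖²)(1 - ‖z_n‖²)`. As `r⁶ H₃(1)` is an explicit
polynomial in `z₁, …, z₄`, the triangle inequality reduces the bound to a polynomial inequality
in `‖z₁‖, ‖z₂‖` on the unit square; then let `r → 1`.
-/

open Complex Metric intervalIntegral Filter Set
open scoped Real ComplexConjugate ComplexOrder Topology

theorem integral_exp_int_mul_I (n : ℤ) :
    ∫ θ in (0 : ℝ)..2 * π, exp (n * θ * I) = if n = 0 then 2 * π else 0 := by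
  split_ifs with hn
  · simp [hn]
  have hc : (n : ℂ) * I ≠ 0 := by simp [hn]
  simp_rw [mul_right_comm _ _ I]
  rw [integral_exp_mul_complex hc]
  have : (n : ℂ) * I * ((2 * π : ℝ) : ℂ) = n * (2 * π * I) := by push_cast; ring
  rw [this, exp_int_mul_two_pi_mul_I]
  simp

theorem summable_norm_mul_pow_of_hasSum {b : ℕ → ℂ} {g : ℂ → ℂ} {R s : ℝ}
    (hg : ∀ z ∈ ball (0 : ℂ) R, HasSum (fun n => b n * z ^ n) (g z)) (hs : 0 ≤ s) (hsR : s < R) :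
    Summable fun n => ‖b n‖ * s ^ n := by
  obtain ⟨u, hsu, huR⟩ := exists_between hsR
  have hu : 0 < u := hs.trans_lt hsu
  obtain ⟨C, hC⟩ : BddAbove (Set.range fun n => ‖b n‖ * u ^ n) := by
    have hmem : (u : ℂ) ∈ ball (0 : ℂ) R := by simpa [abs_of_pos hu] using huR
    simpa [abs_of_pos hu] using (hg u hmem).summable.tendsto_atTop_zero.norm.bddAbove_range
  refine .of_nonneg_of_le (fun n => by positivity) (fun n => ?_)
    ((summable_geometric_of_lt_one (by positivity) ((div_lt_one hu).2 hsu)).mul_left C)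
  calc ‖b n‖ * s ^ n = ‖b n‖ * u ^ n * (s / u) ^ n := by rw [div_pow]; field_simp
    _ ≤ C * (s / u) ^ n := by gcongr; exact hC ⟨n, rfl⟩

/-- The Fourier coefficients of `θ ↦ ∑ bₙ (r e^{iθ})ⁿ`. -/
def circleCoeff (b : ℕ → ℂ) (r : ℝ) : ℤ → ℂ
  | (n : ℕ) => b n * r ^ n
  | Int.negSucc _ => 0

theorem integral_circleMap_mul_exp_of_hasSum {b : ℕ → ℂ} {g : ℂ → ℂ} {R r : ℝ}
    (hg : ∀ z ∈ ball (0 : ℂ) R, HasSum (fun n => b n * z ^ n) (g z)) (hr : 0 ≤ r) (hrR : r < R)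
    (m : ℤ) :
    ∫ θ in (0 : ℝ)..2 * π, g (circleMap 0 r θ) * exp (-(m * θ * I)) =
      2 * π * circleCoeff b r m := by
  set F : ℕ → ℝ → ℂ := fun k θ => b k * r ^ k * exp (((k - m : ℤ) : ℂ) * θ * I)
  have hF : ∀ θ : ℝ, HasSum (fun k => F k θ) (g (circleMap 0 r θ) * exp (-(m * θ * I))) := by
    intro θ
    have hmem : circleMap 0 r θ ∈ ball (0 : ℂ) R := by simpa [abs_of_nonneg hr] using hrR
    have hterm : ∀ k, b k * circleMap 0 r θ ^ k * exp (-(m * θ * I)) = F k θ := by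
      intro k
      rw [circleMap_zero, mul_pow, ← Complex.exp_nat_mul, mul_assoc, mul_assoc, ← Complex.exp_add]
      simp only [F]
      push_cast
      ring_nf
    simpa only [hterm] using (hg _ hmem).mul_right (exp (-(m * θ * I)))
  have hintegral : HasSum (fun k => ∫ θ in (0 : ℝ)..2 * π, F k θ)
      (∫ θ in (0 : ℝ)..2 * π, g (circleMap 0 r θ) * exp (-(m * θ * I))) := by
    refine hasSum_integral_of_dominated_convergence (fun k _ => ‖b k‖ * r ^ k)
      (fun k => (Continuous.aestronglyMeasurable (by fun_prop))) (fun k => ?_)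
      (.of_forall fun _ _ => summable_norm_mul_pow_of_hasSum hg hr hrR) intervalIntegrable_const
      (.of_forall fun θ _ => hF θ)
    refine .of_forall fun θ _ => le_of_eq ?_
    have : ((k - m : ℤ) : ℂ) * θ * I = (((k - m : ℤ) * θ : ℝ) : ℂ) * I := by push_cast; ring
    rw [norm_mul, this, norm_exp_ofReal_mul_I]
    simp [abs_of_nonneg hr]
  simp only [F, integral_const_mul, integral_exp_int_mul_I, sub_eq_zero] at hintegral
  refine hintegral.unique ?_
  cases m with
  | ofNat n =>
    convert hasSum_single n fun k hk => ?_ using 1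
    · simp [circleCoeff]; ring
    · simp [hk]
  | negSucc n =>
    simp only [circleCoeff, mul_zero]
    convert hasSum_zero with k
    have : (k : ℤ) ≠ Int.negSucc n := by omega
    simp [this]

theorem coeff_eq_of_hasSum {a b : ℕ → ℂ} {g : ℂ → ℂ} {R : ℝ} (hR : 0 < R)
    (ha : ∀ z ∈ ball (0 : ℂ) R, HasSum (fun n => a n * z ^ n) (g z))
    (hb : ∀ z ∈ ball (0 : ℂ) R, HasSum (fun n => b n * z ^ n) (g z)) : a = b := by
  funext n
  have ha' := integral_circleMap_mul_exp_of_hasSum ha (half_pos hR).le (half_lt_self hR) n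
  have hb' := integral_circleMap_mul_exp_of_hasSum hb (half_pos hR).le (half_lt_self hR) n
  simpa [circleCoeff, Real.pi_ne_zero, hR.ne'] using ha'.symm.trans hb'

theorem hasSum_deriv_of_hasSum {a : ℕ → ℂ} {f : ℂ → ℂ} {R : ℝ}
    (hf : ∀ z ∈ ball (0 : ℂ) R, HasSum (fun n => a n * z ^ n) (f z))
    (hdiff : DifferentiableOn ℂ f (ball 0 R)) {z : ℂ} (hz : z ∈ ball (0 : ℂ) R) :
    HasSum (fun n => (n + 1) * a (n + 1) * z ^ n) (deriv f z) := by
  have htaylor : a = fun n => (n.factorial : ℂ)⁻¹ * iteratedDeriv n f 0 :=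
    coeff_eq_of_hasSum (pos_of_mem_ball hz) hf fun w hw => by
      simpa [mul_comm, mul_left_comm] using Complex.hasSum_taylorSeries_on_ball hdiff hw
  have hderiv : DifferentiableOn ℂ (deriv f) (ball 0 R) :=
    (hdiff.analyticOnNhd isOpen_ball).deriv.differentiableOn
  have hterm : ∀ n : ℕ, (n.factorial : ℂ)⁻¹ • (z - 0) ^ n • iteratedDeriv n (deriv f) 0 =
      (n + 1) * a (n + 1) * z ^ n := by
    intro n
    rw [htaylor, ← iteratedDeriv_succ']
    simp only [Nat.factorial_succ, smul_eq_mul, sub_zero]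
    push_cast
    field_simp
  simpa only [hterm] using Complex.hasSum_taylorSeries_on_ball hderiv hz

/-- The Fourier coefficients of `θ ↦ Re p(r e^{iθ})` when `p = ∑ cₙ zⁿ`. -/
noncomputable def circleReCoeff (c : ℕ → ℂ) (r : ℝ) (m : ℤ) : ℂ :=
  (circleCoeff c r m + conj (circleCoeff c r (-m))) / 2

theorem circleReCoeff_neg (c : ℕ → ℂ) (r : ℝ) (m : ℤ) :
    circleReCoeff c r (-m) = conj (circleReCoeff c r m) := by
  simp [circleReCoeff, map_div₀, map_ofNat, add_comm]

theorem circleReCoeff_natCast {c : ℕ → ℂ} {r : ℝ} {n : ℕ} (hn : 0 < n) :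
    circleReCoeff c r n = c n * r ^ n / 2 := by
  cases n with
  | zero => omega
  | succ k =>
    rw [circleReCoeff, show -((k + 1 : ℕ) : ℤ) = Int.negSucc k from rfl]
    simp [circleCoeff]

theorem integral_re_circleMap_mul_exp_of_hasSum {c : ℕ → ℂ} {p : ℂ → ℂ} {R r : ℝ}
    (hp : ∀ z ∈ ball (0 : ℂ) R, HasSum (fun n => c n * z ^ n) (p z))
    (hcont : ContinuousOn p (ball 0 R)) (hr : 0 ≤ r) (hrR : r < R) (m : ℤ) :
    ∫ θ in (0 : ℝ)..2 * π, ((p (circleMap 0 r θ)).re : ℂ) * exp (-(m * θ * I)) =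
      2 * π * circleReCoeff c r m := by
  have hmem : ∀ θ, circleMap 0 r θ ∈ ball (0 : ℂ) R := fun θ => by
    simpa [abs_of_nonneg hr] using hrR
  have hpc : Continuous fun θ => p (circleMap 0 r θ) :=
    hcont.comp_continuous (continuous_circleMap 0 r) hmem
  have hsplit : ∀ θ : ℝ, ((p (circleMap 0 r θ)).re : ℂ) * exp (-(m * θ * I)) =
      (p (circleMap 0 r θ) * exp (-(m * θ * I)) +
        conj (p (circleMap 0 r θ) * exp (-((-m : ℤ) * θ * I)))) / 2 := by
    intro θ
    rw [re_eq_add_conj, map_mul, ← exp_conj]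
    simp only [map_neg, map_mul, conj_ofReal, conj_I, map_intCast, Int.cast_neg]
    ring_nf
  simp_rw [hsplit]
  rw [intervalIntegral.integral_div, intervalIntegral.integral_add, intervalIntegral_conj,
    integral_circleMap_mul_exp_of_hasSum hp hr hrR, integral_circleMap_mul_exp_of_hasSum hp hr hrR]
  · simp only [circleReCoeff, map_mul, map_ofNat, conj_ofReal]
    ring
  · exact (hpc.mul (by fun_prop)).intervalIntegrable _ _
  · exact (continuous_conj.comp (hpc.mul (by fun_prop))).intervalIntegrable _ _

/-- Positive definiteness of a function on `ℤ` in the sense of Herglotz and Bochner. -/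
def IsPositiveDefinite (X : ℤ → ℂ) : Prop :=
  ∀ (n : ℕ) (s : Fin n → ℤ), (Matrix.of fun j k => X (s j - s k)).PosSemidef

/-- The easy half of the Carathéodory–Toeplitz theorem. -/
theorem isPositiveDefinite_circleReCoeff {c : ℕ → ℂ} {p : ℂ → ℂ} {R r : ℝ}
    (hp : ∀ z ∈ ball (0 : ℂ) R, HasSum (fun n => c n * z ^ n) (p z))
    (hcont : ContinuousOn p (ball 0 R)) (hre : ∀ z ∈ ball (0 : ℂ) R, 0 ≤ (p z).re)
    (hr : 0 ≤ r) (hrR : r < R) :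
    IsPositiveDefinite (circleReCoeff c r) := by
  intro n s
  have hmem : ∀ θ, circleMap 0 r θ ∈ ball (0 : ℂ) R := fun θ => by
    simpa [abs_of_nonneg hr] using hrR
  have hpc : Continuous fun θ => p (circleMap 0 r θ) :=
    hcont.comp_continuous (continuous_circleMap 0 r) hmem
  set h : ℝ → ℝ := fun θ => (p (circleMap 0 r θ)).re
  have hherm : (Matrix.of fun j k => circleReCoeff c r (s j - s k)).IsHermitian := by
    ext j k
    simp [← circleReCoeff_neg]
  refine .of_dotProduct_mulVec_nonneg hherm fun x => ?_
  set T : ℝ → ℂ := fun θ => ∑ k, x k * exp (s k * θ * I)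
  have hT : ∀ θ : ℝ, ((‖T θ‖ ^ 2 : ℝ) : ℂ) =
      ∑ j, ∑ k, conj (x j) * x k * exp (-(((s j - s k : ℤ) : ℂ) * θ * I)) := by
    intro θ
    rw [ofReal_pow, ← mul_conj', mul_comm, map_sum, Finset.sum_mul_sum]
    refine Finset.sum_congr rfl fun j _ => Finset.sum_congr rfl fun k _ => ?_
    rw [map_mul, ← exp_conj, mul_mul_mul_comm, ← Complex.exp_add]
    simp only [map_mul, conj_ofReal, conj_I, map_intCast]
    push_cast
    ring_nf
  have hcoeff : ∀ d : ℤ, circleReCoeff c r d =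
      (2 * π : ℂ)⁻¹ * ∫ θ in (0 : ℝ)..2 * π, (h θ : ℂ) * exp (-(d * θ * I)) := by
    intro d
    rw [integral_re_circleMap_mul_exp_of_hasSum hp hcont hr hrR]
    field_simp
  have hform : star x ⬝ᵥ (Matrix.of fun j k => circleReCoeff c r (s j - s k)).mulVec x =
      (((2 * π)⁻¹ * ∫ θ in (0 : ℝ)..2 * π, h θ * ‖T θ‖ ^ 2 : ℝ) : ℂ) := by
    simp_rw [ofReal_mul, ← intervalIntegral.integral_ofReal, ofReal_mul, hT, Finset.mul_sum]
    simp only [dotProduct, Matrix.mulVec, Matrix.of_apply, Pi.star_apply, Finset.mul_sum]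
    have hhc : Continuous fun θ => (h θ : ℂ) := continuous_ofReal.comp (continuous_re.comp hpc)
    rw [intervalIntegral.integral_finsetSum fun j _ => ?_, Finset.mul_sum]
    · refine Finset.sum_congr rfl fun j _ => ?_
      rw [intervalIntegral.integral_finsetSum fun k _ => ?_, Finset.mul_sum]
      · refine Finset.sum_congr rfl fun k _ => ?_
        simp_rw [mul_left_comm (h _ : ℂ), intervalIntegral.integral_const_mul]
        rw [hcoeff, star_def]
        push_cast
        ring
      · exact (hhc.mul (by fun_prop)).intervalIntegrable _ _
    · exact (continuous_finsetSum _ fun k _ => hhc.mul (by fun_prop)).intervalIntegrable _ _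
  rw [hform]
  refine zero_le_real.2 (mul_nonneg (by positivity) (integral_nonneg (by positivity) fun θ _ => ?_))
  exact mul_nonneg (hre _ (hmem θ)) (sq_nonneg _)

namespace IsPositiveDefinite

variable {X : ℤ → ℂ}

theorem neg_eq_conj (hX : IsPositiveDefinite X) (m : ℤ) : X (-m) = conj (X m) := by
  simpa using ((hX 2 ![0, m]).isHermitian.apply 0 1).symm

theorem norm_le_one (hX : IsPositiveDefinite X) (h0 : X 0 = 1) (n : ℤ) : ‖X n‖ ≤ 1 := by
  have hdet := (hX 2 ![0, n]).det_nonneg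
  have : (Matrix.of fun j k => X (![0, n] j - ![0, n] k)).det = ((1 - ‖X n‖ ^ 2 : ℝ) : ℂ) := by
    simp [Matrix.det_fin_two, h0, hX.neg_eq_conj, ← mul_conj', mul_comm]
  rw [this, zero_le_real, sub_nonneg] at hdet
  exact (sq_le_one_iff₀ (norm_nonneg _)).1 hdet

theorem sq_norm_sub_mul_le (hX : IsPositiveDefinite X) (h0 : X 0 = 1) (m n : ℤ) :
    ‖X (m + n) - X m * X n‖ ^ 2 ≤ (1 - ‖X m‖ ^ 2) * (1 - ‖X n‖ ^ 2) := by
  have hdet := (hX 3 ![0, m, m + n]).det_nonneg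
  have : (Matrix.of fun j k => X (![0, m, m + n] j - ![0, m, m + n] k)).det =
      (((1 - ‖X m‖ ^ 2) * (1 - ‖X n‖ ^ 2) - ‖X (m + n) - X m * X n‖ ^ 2 : ℝ) : ℂ) := by
    simp only [Matrix.det_fin_three, Matrix.of_apply, Matrix.cons_val_zero, Matrix.cons_val_one,
      Matrix.cons_val_two, Matrix.head_cons, Matrix.tail_cons, sub_self, sub_zero, zero_sub,
      sub_add_cancel_left, add_sub_cancel_left, h0, hX.neg_eq_conj]
    push_cast [← mul_conj', map_sub, map_mul]
    ring
  rw [this, zero_le_real, sub_nonneg] at hdet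
  exact hdet

theorem norm_sub_sq_le (hX : IsPositiveDefinite X) (h0 : X 0 = 1) (n : ℤ) :
    ‖X (n + n) - X n ^ 2‖ ≤ 1 - ‖X n‖ ^ 2 := by
  have h := hX.sq_norm_sub_mul_le h0 n n
  rw [← sq, ← sq] at h
  have : 0 ≤ 1 - ‖X n‖ ^ 2 := by nlinarith [hX.norm_le_one h0 n, norm_nonneg (X n)]
  exact (pow_le_pow_iff_left₀ (norm_nonneg _) this two_ne_zero).1 h

end IsPositiveDefinite

theorem quartic_bound_of_add_two_sq_le_one {p q : ℝ} (hp0 : 0 ≤ p) (hq0 : 0 ≤ q)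
    (h : q + 2 * p ^ 2 ≤ 1) :
    p ^ 2 * q ^ 2 / 60 + 4 * q ^ 3 / 135 + p * q * ((1 - p ^ 2) + (1 - q ^ 2)) / 12
      + (1 - p ^ 2) * (1 - q ^ 2) / 4 + (4 * q + 6 * p ^ 2) * (1 - q ^ 2) / 15 ≤ 23 / 60 := by
  nlinarith [sq_nonneg (p - q), sq_nonneg (p * q), sq_nonneg (q - 1 / 3), sq_nonneg (p - 3 / 5),
    mul_nonneg hp0 hq0, sq_nonneg (p + q - 9 / 10), mul_nonneg (mul_nonneg hp0 hp0) hq0,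
    mul_nonneg (mul_nonneg hq0 hq0) hp0]

theorem quartic_bound_of_one_le_add_two_sq {p q : ℝ} (hp0 : 0 ≤ p) (hp1 : p ≤ 1) (hq0 : 0 ≤ q)
    (hq1 : q ≤ 1) (h : 1 ≤ q + 2 * p ^ 2) :
    p ^ 2 * q ^ 2 / 60 + 4 * q ^ 3 / 135 + p * q * ((1 - p ^ 2) + (1 - q ^ 2)) / 12
      + (1 - p ^ 2) * (1 - q ^ 2) / 4 + (4 - 2 * p ^ 2) * (1 - q ^ 2) / 15 ≤ 23 / 60 := by
  nlinarith [sq_nonneg (p - q), sq_nonneg (p * q), sq_nonneg (q - 1 / 3), sq_nonneg (p - 3 / 5),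
    mul_nonneg hp0 hq0, sq_nonneg (p + q - 9 / 10), mul_nonneg (mul_nonneg hp0 hp0) hq0,
    mul_nonneg (mul_nonneg hq0 hq0) hp0]

theorem hankel_real_bound {p q U E V : ℝ} (hp0 : 0 ≤ p) (hp1 : p ≤ 1) (hq0 : 0 ≤ q) (hq1 : q ≤ 1)
    (hU : U ^ 2 ≤ (1 - p ^ 2) * (1 - q ^ 2))
    (hE0 : 0 ≤ E) (hE1 : E ≤ 1 - p ^ 2) (hE2 : E ≤ q + p ^ 2) (hV0 : 0 ≤ V) (hV1 : V ≤ 1 - q ^ 2) :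
    p ^ 2 * q ^ 2 / 60 + 4 * q ^ 3 / 135 + p * q * U / 6 + U ^ 2 / 4
      + (4 * E / 15 + 2 * p ^ 2 / 15) * V ≤ 23 / 60 := by
  have hUle : U ≤ ((1 - p ^ 2) + (1 - q ^ 2)) / 2 := by
    nlinarith [sq_nonneg ((1 - p ^ 2) - (1 - q ^ 2))]
  have hpqU : p * q * U ≤ p * q * ((1 - p ^ 2) + (1 - q ^ 2)) / 2 := by
    nlinarith [mul_nonneg hp0 hq0]
  have hEV : (4 * E / 15 + 2 * p ^ 2 / 15) * V ≤ (4 * E / 15 + 2 * p ^ 2 / 15) * (1 - q ^ 2) := by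
    gcongr
  have ht : 0 ≤ 1 - q ^ 2 := by nlinarith
  -- of the two bounds on `E`, `E ≤ q + p²` is the sharper one exactly when `q + 2p² ≤ 1`
  rcases le_total (q + 2 * p ^ 2) 1 with hc | hc
  · have := quartic_bound_of_add_two_sq_le_one hp0 hq0 hc
    nlinarith
  · have := quartic_bound_of_one_le_add_two_sq hp0 hp1 hq0 hq1 hc
    nlinarith

/-- `H₃(1)` written in the variables `zₙ = (n + 1) aₙ₊₁ / 2`. -/
noncomputable def hankelForm (z₁ z₂ z₃ z₄ : ℂ) : ℂ :=
  z₁ ^ 2 * z₂ ^ 2 / 60 - 4 * z₂ ^ 3 / 135 + z₁ * z₂ * (z₃ - z₁ * z₂) / 6 - (z₃ - z₁ * z₂) ^ 2 / 4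
    + (4 * (z₂ - z₁ ^ 2) / 15 - 2 * z₁ ^ 2 / 15) * (z₄ - z₂ ^ 2)

theorem norm_hankelForm_le {z₁ z₂ z₃ z₄ : ℂ} (h₁ : ‖z₁‖ ≤ 1) (h₂ : ‖z₂‖ ≤ 1)
    (h₁₁ : ‖z₂ - z₁ ^ 2‖ ≤ 1 - ‖z₁‖ ^ 2)
    (h₁₂ : ‖z₃ - z₁ * z₂‖ ^ 2 ≤ (1 - ‖z₁‖ ^ 2) * (1 - ‖z₂‖ ^ 2))
    (h₂₂ : ‖z₄ - z₂ ^ 2‖ ≤ 1 - ‖z₂‖ ^ 2) :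
    ‖hankelForm z₁ z₂ z₃ z₄‖ ≤ 23 / 60 := by
  unfold hankelForm
  set U := z₃ - z₁ * z₂
  set F := 4 * (z₂ - z₁ ^ 2) / 15 - 2 * z₁ ^ 2 / 15
  have hF : ‖F‖ ≤ 4 * ‖z₂ - z₁ ^ 2‖ / 15 + 2 * ‖z₁‖ ^ 2 / 15 := by
    refine (norm_sub_le (4 * (z₂ - z₁ ^ 2) / 15) (2 * z₁ ^ 2 / 15)).trans_eq ?_
    simp only [norm_div, norm_mul, norm_pow, RCLike.norm_ofNat]
  have e₁ := norm_add_le (z₁ ^ 2 * z₂ ^ 2 / 60 - 4 * z₂ ^ 3 / 135 + z₁ * z₂ * U / 6 - U ^ 2 / 4)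
    (F * (z₄ - z₂ ^ 2))
  have e₂ := norm_sub_le (z₁ ^ 2 * z₂ ^ 2 / 60 - 4 * z₂ ^ 3 / 135 + z₁ * z₂ * U / 6) (U ^ 2 / 4)
  have e₃ := norm_add_le (z₁ ^ 2 * z₂ ^ 2 / 60 - 4 * z₂ ^ 3 / 135) (z₁ * z₂ * U / 6)
  have e₄ := norm_sub_le (z₁ ^ 2 * z₂ ^ 2 / 60) (4 * z₂ ^ 3 / 135)
  simp only [norm_div, norm_mul, norm_pow, RCLike.norm_ofNat] at e₁ e₂ e₃ e₄
  have hFV := mul_le_mul_of_nonneg_right hF (norm_nonneg (z₄ - z₂ ^ 2))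
  have := hankel_real_bound (norm_nonneg z₁) h₁ (norm_nonneg z₂) h₂ h₁₂ (norm_nonneg _) h₁₁
    ((norm_sub_le _ _).trans_eq (by rw [norm_pow])) (norm_nonneg _) h₂₂
  linarith

theorem IsPositiveDefinite.norm_hankelForm_le {X : ℤ → ℂ} (hX : IsPositiveDefinite X)
    (h0 : X 0 = 1) : ‖hankelForm (X 1) (X 2) (X 3) (X 4)‖ ≤ 23 / 60 :=
  _root_.norm_hankelForm_le (hX.norm_le_one h0 1) (hX.norm_le_one h0 2) (hX.norm_sub_sq_le h0 1)
    (hX.sq_norm_sub_mul_le h0 1 2) (hX.norm_sub_sq_le h0 2)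

theorem hankelForm_circleReCoeff {a c : ℕ → ℂ} (hc : ∀ n, c n = (n + 1) * a (n + 1)) (r : ℝ) :
    hankelForm (circleReCoeff c r 1) (circleReCoeff c r 2) (circleReCoeff c r 3)
        (circleReCoeff c r 4) =
      r ^ 6 * (a 3 * (a 2 * a 4 - a 3 ^ 2) - a 4 * (a 4 - a 2 * a 3) + a 5 * (a 3 - a 2 ^ 2)) := by
  have e₁ := circleReCoeff_natCast (c := c) (r := r) (n := 1) one_pos
  have e₂ := circleReCoeff_natCast (c := c) (r := r) (n := 2) two_pos
  have e₃ := circleReCoeff_natCast (c := c) (r := r) (n := 3) three_pos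
  have e₄ := circleReCoeff_natCast (c := c) (r := r) (n := 4) four_pos
  simp only [Nat.cast_one, Nat.cast_ofNat] at e₁ e₂ e₃ e₄
  rw [e₁, e₂, e₃, e₄, hankelForm, hc, hc, hc, hc]
  push_cast
  ring

theorem hankel_bound_R_general (f f' : ℂ → ℂ) (a : ℕ → ℂ)
    (ha1 : a 1 = 1)
    (hfsum : ∀ z ∈ ball (0 : ℂ) 1, HasSum (fun n => a n * z ^ n) (f z))
    (hderiv : ∀ z ∈ ball (0 : ℂ) 1, HasDerivAt f (f' z) z)
    (hre : ∀ z ∈ ball (0 : ℂ) 1, 0 < (f' z).re) :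
    ‖a 3 * (a 2 * a 4 - a 3 ^ 2) - a 4 * (a 4 - a 2 * a 3) + a 5 * (a 3 - a 2 ^ 2)‖
      ≤ 207 / 540 := by
  set H := a 3 * (a 2 * a 4 - a 3 ^ 2) - a 4 * (a 4 - a 2 * a 3) + a 5 * (a 3 - a 2 ^ 2)
  have hdiff : DifferentiableOn ℂ f (ball 0 1) := fun z hz =>
    (hderiv z hz).differentiableAt.differentiableWithinAt
  have hf' : EqOn (deriv f) f' (ball 0 1) := fun z hz => (hderiv z hz).deriv
  obtain ⟨c, hc⟩ : ∃ c : ℕ → ℂ, ∀ n, c n = (n + 1) * a (n + 1) := ⟨_, fun _ => rfl⟩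
  have hsum : ∀ z ∈ ball (0 : ℂ) 1, HasSum (fun n => c n * z ^ n) (f' z) := fun z hz => by
    simpa only [hc, hf' hz] using hasSum_deriv_of_hasSum hfsum hdiff hz
  have hcont : ContinuousOn f' (ball 0 1) :=
    (hdiff.analyticOnNhd isOpen_ball).deriv.continuousOn.congr fun z hz => (hf' hz).symm
  have hbound : ∀ r ∈ Ioo (0 : ℝ) 1, r ^ 6 * ‖H‖ ≤ 23 / 60 := by
    rintro r ⟨hr0, hr1⟩
    have hX := isPositiveDefinite_circleReCoeff hsum hcont (fun z hz => (hre z hz).le) hr0.le hr1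
    have h0 : circleReCoeff c r 0 = 1 := by
      simp [circleReCoeff, circleCoeff, hc, ha1]
    have := hX.norm_hankelForm_le h0
    rwa [hankelForm_circleReCoeff hc, norm_mul, norm_pow, norm_real,
      Real.norm_of_nonneg hr0.le] at this
  have htend : Tendsto (fun r : ℝ => r ^ 6 * ‖H‖) (𝓝[<] 1) (𝓝 ‖H‖) := by
    have h6 : Tendsto (fun r : ℝ => r ^ 6) (𝓝[<] 1) (𝓝 1) :=
      ((continuous_pow 6).tendsto' 1 1 (one_pow 6)).mono_left nhdsWithin_le_nhds
    simpa using h6.mul_const ‖H‖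
  linarith [le_of_tendsto htend (eventually_of_mem (Ioo_mem_nhdsLT zero_lt_one) hbound)]

theorem hankel_bound_R (f f' : ℂ → ℂ) (a : ℕ → ℂ)
    (ha0 : a 0 = 0) (ha1 : a 1 = 1)
    (hfsum : ∀ z ∈ ball (0 : ℂ) 1, HasSum (fun n => a n * z ^ n) (f z))
    (hinj : Set.InjOn f (ball (0 : ℂ) 1))
    (hderiv : ∀ z ∈ ball (0 : ℂ) 1, HasDerivAt f (f' z) z)
    (hre : ∀ z ∈ ball (0 : ℂ) 1, 0 < (f' z).re) :
    ‖a 3 * (a 2 * a 4 - a 3 ^ 2) - a 4 * (a 4 - a 2 * a 3) + a 5 * (a 3 - a 2 ^ 2)‖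
      ≤ 207 / 540 :=
  hankel_bound_R_general f f' a ha1 hfsum hderiv hre
end

section
/- For all real x, y with 0 ≤ x, 0 ≤ y, and x + y ≤ 1, the function g₁(x,y) = −128y³ + (144 − 144x + 12x²)y − 72x² + 72x + 7 satisfies g₁(x,y) ≤ 7 + 24√6. -/
/-!
Write `g₁(x, y) - 7 = (144y - 128y³) + x((72 - 144y) - (72 - 12y)x)`. The cubic part equals
`24√6 - 4(√6 - 4y)²(2y + √6)`, so it is at most `24√6`, with equality at `y = √6/4`. The part
involving `x` is `≤ 0` when `y ≥ 1/2`; when `y ≤ 1/2` it is at most `32(1 - 2y)²`, and this is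
absorbed by the square factor because `√6 - 4y ≥ 2(1 - 2y)`.
-/

lemma sqrt_six_sub_cubic_eq (y : ℝ) :
    24 * √6 - (144 * y - 128 * y ^ 3) = 4 * (√6 - 4 * y) ^ 2 * (2 * y + √6) := by
  have h : √6 ^ 2 = 6 := Real.sq_sqrt (by norm_num)
  linear_combination (24 * y - 4 * √6) * h

lemma cubic_le_sqrt_six {y : ℝ} (hy : 0 ≤ y) : 144 * y - 128 * y ^ 3 ≤ 24 * √6 := by
  have := sqrt_six_sub_cubic_eq y
  have : 0 ≤ 4 * (√6 - 4 * y) ^ 2 * (2 * y + √6) := by positivity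
  linarith

lemma cubic_add_sq_le_sqrt_six {y : ℝ} (hy₀ : 0 ≤ y) (hy : y ≤ 1 / 2) :
    144 * y - 128 * y ^ 3 + 32 * (1 - 2 * y) ^ 2 ≤ 24 * √6 := by
  have hs : 2 ≤ √6 := Real.le_sqrt_of_sq_le (by norm_num)
  have hsq : (2 * (1 - 2 * y)) ^ 2 ≤ (√6 - 4 * y) ^ 2 :=
    pow_le_pow_left₀ (by linarith) (by linarith) 2
  have := sqrt_six_sub_cubic_eq y
  linarith [mul_le_mul hsq (by linarith : 2 ≤ 2 * y + √6) zero_le_two (sq_nonneg _)]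

lemma linear_sub_quadratic_nonpos {x y : ℝ} (hx : 0 ≤ x) (hy : 1 / 2 ≤ y) (hy' : y ≤ 6) :
    x * (72 - 144 * y) - x ^ 2 * (72 - 12 * y) ≤ 0 := by
  have : x * (72 - 144 * y) ≤ 0 := mul_nonpos_of_nonneg_of_nonpos hx (by linarith)
  have : 0 ≤ x ^ 2 * (72 - 12 * y) := mul_nonneg (sq_nonneg x) (by linarith)
  linarith

lemma linear_sub_quadratic_le {x y : ℝ} (hy : y ≤ 1 / 2) :
    x * (72 - 144 * y) - x ^ 2 * (72 - 12 * y) ≤ 32 * (1 - 2 * y) ^ 2 := by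
  nlinarith [sq_nonneg (8 * (1 - 2 * y) - 9 * x),
    mul_nonneg (sq_nonneg x) (by linarith : 0 ≤ 1 / 2 - y)]

theorem g1_bound (x y : ℝ) (hx : 0 ≤ x) (hy : 0 ≤ y) (hxy : x + y ≤ 1) :
    -128 * y ^ 3 + (144 - 144 * x + 12 * x ^ 2) * y - 72 * x ^ 2 + 72 * x + 7
      ≤ 7 + 24 * Real.sqrt 6 := by
  have hsplit : -128 * y ^ 3 + (144 - 144 * x + 12 * x ^ 2) * y - 72 * x ^ 2 + 72 * x + 7
      = 7 + (144 * y - 128 * y ^ 3) + (x * (72 - 144 * y) - x ^ 2 * (72 - 12 * y)) := by ring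
  rw [hsplit]
  rcases le_total y (1 / 2) with hy_half | hy_half
  · linarith [cubic_add_sq_le_sqrt_six hy hy_half, linear_sub_quadratic_le (x := x) hy_half]
  · linarith [cubic_le_sqrt_six hy, linear_sub_quadratic_nonpos hx hy_half (by linarith)]
end

section
/- The function g₁(x,y) = −128y³ + (144 − 144x + 12x²)y − 72x² + 72x + 7 has no critical points in the open square (0,1) × (0,1). -/
/-!
Solving `∂g₁/∂x = 0` gives `y (6 - x) = 3 - 6x`, which forces `x < 1/2` when `y > 0`.
Eliminating `y` against `∂g₁/∂y = 0` shows that `x` is a root of the resultant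
`(x² - 12x + 12)(6 - x)² - 32(3 - 6x)²`, which is positive on `[0, 1/2]`.
-/

def g1Resultant (x : ℝ) : ℝ :=
  (x ^ 2 - 12 * x + 12) * (6 - x) ^ 2 - 32 * (3 - 6 * x) ^ 2

theorem g1Resultant_eq_zero_of_critical {x y : ℝ}
    (hfx : -144 * y + 24 * x * y - 144 * x + 72 = 0)
    (hfy : -384 * y ^ 2 + 144 - 144 * x + 12 * x ^ 2 = 0) :
    g1Resultant x = 0 := by
  unfold g1Resultant
  linear_combination (-(4 / 3) * (y * (6 - x) + 3 - 6 * x)) * hfx + ((6 - x) ^ 2 / 12) * hfy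

theorem g1Resultant_pos {x : ℝ} (h0 : 0 ≤ x) (h1 : x ≤ 1 / 2) : 0 < g1Resultant x := by
  have hcube : x ^ 3 ≤ 1 / 8 := by
    calc x ^ 3 ≤ (1 / 2) ^ 3 := by gcongr
      _ = 1 / 8 := by norm_num
  unfold g1Resultant
  nlinarith [mul_nonneg h0 (sub_nonneg.2 h1), pow_nonneg h0 4]

theorem g1_no_critical_points (x y : ℝ) (hx : x ∈ Set.Ioo (0 : ℝ) 1)
    (hy : y ∈ Set.Ioo (0 : ℝ) 1) :
    ¬ (-144 * y + 24 * x * y - 144 * x + 72 = 0 ∧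
       -384 * y ^ 2 + 144 - 144 * x + 12 * x ^ 2 = 0) := by
  rintro ⟨hfx, hfy⟩
  have hx_half : x < 1 / 2 := by
    have : 0 < y * (6 - x) := mul_pos hy.1 (by linarith [hx.2])
    linarith
  exact (g1Resultant_pos hx.1.le hx_half.le).ne' (g1Resultant_eq_zero_of_critical hfx hfy)
end

section
/- Let x, y ≥ 0 with x + y ≤ 1 and define h₂(x,y) = −12800y³ + 10524xy² + (1140x² − 20736x + 20736)y + 1217x³ − 2592x² + 13608x. Then ∂h₂/∂x ≥ 0 throughout the triangle {x ≥ 0, y ≥ 0, x + y ≤ 1}. -/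
/-! The partial derivative is `3 q` with
`q = 380 (2 - x - y)² + 2696 (1 - y)² + 104 (1 - x)² + 733 x² + 432 y² + 216`,
a sum of squares plus a positive constant, so it is positive on the whole plane. -/

theorem hasDerivAt_cubic (a b c d x : ℝ) :
    HasDerivAt (fun t => a * t ^ 3 + b * t ^ 2 + c * t + d) (a * (3 * x ^ 2) + b * (2 * x) + c) x := by
  simpa using ((((hasDerivAt_pow 3 x).const_mul a).add ((hasDerivAt_pow 2 x).const_mul b)).add
    ((hasDerivAt_id x).const_mul c)).add_const d

def h₂ (x y : ℝ) : ℝ :=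
  -12800 * y ^ 3 + 10524 * x * y ^ 2 + (1140 * x ^ 2 - 20736 * x + 20736) * y
    + 1217 * x ^ 3 - 2592 * x ^ 2 + 13608 * x

def h₂_partialX (x y : ℝ) : ℝ :=
  3 * (3508 * y ^ 2 - 6912 * y + 760 * x * y + 1217 * x ^ 2 - 1728 * x + 4536)

theorem hasDerivAt_h₂_fst (x y : ℝ) : HasDerivAt (fun t => h₂ t y) (h₂_partialX x y) x := by
  have h := hasDerivAt_cubic 1217 (1140 * y - 2592) (10524 * y ^ 2 - 20736 * y + 13608)
    (-12800 * y ^ 3 + 20736 * y) x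
  convert h using 1
  · funext t; unfold h₂; ring
  · unfold h₂_partialX; ring

theorem h₂_partialX_pos (x y : ℝ) : 0 < h₂_partialX x y := by
  have sos : h₂_partialX x y = 3 * (380 * (2 - x - y) ^ 2 + 2696 * (1 - y) ^ 2
      + 104 * (1 - x) ^ 2 + 733 * x ^ 2 + 432 * y ^ 2 + 216) := by
    unfold h₂_partialX; ring
  rw [sos]
  positivity

theorem h2_partial_x_nonneg_general (x y : ℝ) :
    0 ≤ deriv (fun t : ℝ => -12800 * y ^ 3 + 10524 * t * y ^ 2
        + (1140 * t ^ 2 - 20736 * t + 20736) * y + 1217 * t ^ 3 - 2592 * t ^ 2 + 13608 * t) x := by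
  change 0 ≤ deriv (fun t => h₂ t y) x
  rw [(hasDerivAt_h₂_fst x y).deriv]
  exact (h₂_partialX_pos x y).le

theorem h2_partial_x_nonneg (x y : ℝ) (hx : 0 ≤ x) (hy : 0 ≤ y) (hxy : x + y ≤ 1) :
    0 ≤ deriv (fun t : ℝ => -12800 * y ^ 3 + 10524 * t * y ^ 2
        + (1140 * t ^ 2 - 20736 * t + 20736) * y + 1217 * t ^ 3 - 2592 * t ^ 2 + 13608 * t) x :=
  h2_partial_x_nonneg_general x y
end

section
/- If c₁, c₂, c₃, c₄ are complex numbers with |c₁| ≤ 1, |c₂| ≤ (1/2)(1 − |c₁|²), |c₃| ≤ 1, |c₄| ≤ 1 − |c₁|² − |c₂|², and |c₃ − 2c₁c₂ + c₁³| ≤ 1, then (1/540)|−54c₃(c₃ − 2c₁c₂ + c₁³) − 81c₃² − 12c₁⁴c₂ − 16c₂³ + 60c₁²c₂² − 7c₁⁶ + 72(2c₂ − c₁²)c₄| ≤ 207/540. -/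
/-!
The terms containing `c₃` have norm at most `54 + 81 = 135`. By the triangle inequality the
remaining terms are bounded by a real polynomial in `‖c₁‖, ‖c₂‖, ‖c₄‖`, which the constraints
on the norms keep below `72`; and `135 + 72 = 207`.
-/

namespace KeyEstimate

variable {𝕜 : Type*} [RCLike 𝕜]

theorem norm_c₃_terms_le {z w : 𝕜} (hz : ‖z‖ ≤ 1) (hw : ‖w‖ ≤ 1) :
    ‖-54 * z * w - 81 * z ^ 2‖ ≤ 135 := by
  have hzw : ‖z‖ * ‖w‖ ≤ 1 := mul_le_one₀ hz (norm_nonneg w) hw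
  have hz2 : ‖z‖ ^ 2 ≤ 1 := pow_le_one₀ (norm_nonneg z) hz
  calc ‖-54 * z * w - 81 * z ^ 2‖ ≤ ‖-54 * z * w‖ + ‖81 * z ^ 2‖ := norm_sub_le _ _
    _ = 54 * (‖z‖ * ‖w‖) + 81 * ‖z‖ ^ 2 := by
        simp only [norm_mul, norm_neg, norm_pow, RCLike.norm_ofNat]; ring
    _ ≤ 135 := by linarith

/-- With `s = a²`: since `2b + s ≤ 1`, the `f`-term is at most `72 (1 - s - b²)`, and the
remaining terms are at most `28 s + 8 b²` because `s ≤ 1` and `b ≤ 1/2`. -/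
theorem poly_c₁_c₂_c₄_terms_le {a b f : ℝ} (hb : 0 ≤ b) (hab : b ≤ 1 / 2 * (1 - a ^ 2))
    (hf : f ≤ 1 - a ^ 2 - b ^ 2) :
    12 * a ^ 4 * b + 16 * b ^ 3 + 60 * a ^ 2 * b ^ 2 + 7 * a ^ 6
      + 72 * (2 * b + a ^ 2) * f ≤ 72 := by
  rw [show a ^ 4 = (a ^ 2) ^ 2 by ring, show a ^ 6 = (a ^ 2) ^ 3 by ring]
  have hs0 := sq_nonneg a
  generalize a ^ 2 = s at *
  have hs1 : s ≤ 1 := by linarith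
  have hb1 : b ≤ 1 / 2 := by linarith
  have hrest : 1 - s - b ^ 2 ≥ 0 := by nlinarith
  have hf_term : (2 * b + s) * f ≤ 1 - s - b ^ 2 := by
    nlinarith [mul_le_mul_of_nonneg_left hf (by linarith : 0 ≤ 2 * b + s),
      mul_nonneg (by linarith : 0 ≤ 1 - (2 * b + s)) hrest]
  have hsb2 : s * b ^ 2 ≤ s / 4 := by nlinarith [mul_le_mul_of_nonneg_left hb1 hs0]
  have hb3 : b ^ 3 ≤ b ^ 2 / 2 := by nlinarith [sq_nonneg b]
  have hs3 : s ^ 3 ≤ s := by nlinarith [sq_nonneg s]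
  have hs2b : s ^ 2 * b ≤ s / 2 := by nlinarith [mul_le_mul_of_nonneg_left hab hs0]
  nlinarith

theorem norm_c₁_c₂_c₄_terms_le {c₁ c₂ c₄ : 𝕜}
    (h2 : ‖c₂‖ ≤ 1 / 2 * (1 - ‖c₁‖ ^ 2)) (h4 : ‖c₄‖ ≤ 1 - ‖c₁‖ ^ 2 - ‖c₂‖ ^ 2) :
    ‖-12 * c₁ ^ 4 * c₂ - 16 * c₂ ^ 3 + 60 * c₁ ^ 2 * c₂ ^ 2 - 7 * c₁ ^ 6
      + 72 * (2 * c₂ - c₁ ^ 2) * c₄‖ ≤ 72 := by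
  have h2c : ‖2 * c₂ - c₁ ^ 2‖ ≤ 2 * ‖c₂‖ + ‖c₁‖ ^ 2 :=
    (norm_sub_le _ _).trans_eq (by rw [norm_mul, norm_pow, RCLike.norm_ofNat])
  calc _ ≤ ‖-12 * c₁ ^ 4 * c₂‖ + ‖16 * c₂ ^ 3‖ + ‖60 * c₁ ^ 2 * c₂ ^ 2‖ + ‖7 * c₁ ^ 6‖
        + ‖72 * (2 * c₂ - c₁ ^ 2) * c₄‖ := by
        refine (norm_add_le _ _).trans (add_le_add ?_ le_rfl)
        refine (norm_sub_le _ _).trans (add_le_add ?_ le_rfl)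
        refine (norm_add_le _ _).trans (add_le_add ?_ le_rfl)
        exact norm_sub_le _ _
    _ ≤ 12 * ‖c₁‖ ^ 4 * ‖c₂‖ + 16 * ‖c₂‖ ^ 3 + 60 * ‖c₁‖ ^ 2 * ‖c₂‖ ^ 2 + 7 * ‖c₁‖ ^ 6
        + 72 * (2 * ‖c₂‖ + ‖c₁‖ ^ 2) * ‖c₄‖ := by
        simp only [norm_mul, norm_neg, norm_pow, RCLike.norm_ofNat]
        gcongr
    _ ≤ 72 := poly_c₁_c₂_c₄_terms_le (norm_nonneg _) h2 h4

end KeyEstimate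

open KeyEstimate in
theorem key_estimate_case1_general (c₁ c₂ c₃ c₄ : ℂ)
    (h2 : ‖c₂‖ ≤ (1 / 2) * (1 - ‖c₁‖ ^ 2))
    (h3 : ‖c₃‖ ≤ 1)
    (h4 : ‖c₄‖ ≤ 1 - ‖c₁‖ ^ 2 - ‖c₂‖ ^ 2)
    (h5 : ‖c₃ - 2 * c₁ * c₂ + c₁ ^ 3‖ ≤ 1) :
    (1 / 540) * ‖(-54 * c₃ * (c₃ - 2 * c₁ * c₂ + c₁ ^ 3) - 81 * c₃ ^ 2
      - 12 * c₁ ^ 4 * c₂ - 16 * c₂ ^ 3 + 60 * c₁ ^ 2 * c₂ ^ 2 - 7 * c₁ ^ 6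
      + 72 * (2 * c₂ - c₁ ^ 2) * c₄)‖ ≤ 207 / 540 := by
  have hsplit : -54 * c₃ * (c₃ - 2 * c₁ * c₂ + c₁ ^ 3) - 81 * c₃ ^ 2
      - 12 * c₁ ^ 4 * c₂ - 16 * c₂ ^ 3 + 60 * c₁ ^ 2 * c₂ ^ 2 - 7 * c₁ ^ 6
      + 72 * (2 * c₂ - c₁ ^ 2) * c₄
      = (-54 * c₃ * (c₃ - 2 * c₁ * c₂ + c₁ ^ 3) - 81 * c₃ ^ 2)
        + (-12 * c₁ ^ 4 * c₂ - 16 * c₂ ^ 3 + 60 * c₁ ^ 2 * c₂ ^ 2 - 7 * c₁ ^ 6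
          + 72 * (2 * c₂ - c₁ ^ 2) * c₄) := by ring
  have hnorm := (norm_add_le _ _).trans
    (add_le_add (norm_c₃_terms_le h3 h5) (norm_c₁_c₂_c₄_terms_le h2 h4))
  rw [← hsplit] at hnorm
  linarith

theorem key_estimate_case1 (c₁ c₂ c₃ c₄ : ℂ)
    (h1 : ‖c₁‖ ≤ 1)
    (h2 : ‖c₂‖ ≤ (1 / 2) * (1 - ‖c₁‖ ^ 2))
    (h3 : ‖c₃‖ ≤ 1)
    (h4 : ‖c₄‖ ≤ 1 - ‖c₁‖ ^ 2 - ‖c₂‖ ^ 2)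
    (h5 : ‖c₃ - 2 * c₁ * c₂ + c₁ ^ 3‖ ≤ 1) :
    (1 / 540) * ‖(-54 * c₃ * (c₃ - 2 * c₁ * c₂ + c₁ ^ 3) - 81 * c₃ ^ 2
      - 12 * c₁ ^ 4 * c₂ - 16 * c₂ ^ 3 + 60 * c₁ ^ 2 * c₂ ^ 2 - 7 * c₁ ^ 6
      + 72 * (2 * c₂ - c₁ ^ 2) * c₄)‖ ≤ 207 / 540 :=
  key_estimate_case1_general c₁ c₂ c₃ c₄ h2 h3 h4 h5
end
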